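/- arXiv:2310.11059 — 2 statements merged into one kernel-verified Lean document; each statement's English description precedes it below -/
import Mathlib

section
/- Let Y be a random variable taking values in a finite set 𝒴, let X_1, …, X_D and Y⁻ be random vectors with values in finite-dimensional Euclidean spaces on a common probability space, and let ε = P( Y ≠ argmax_{y ∈ 𝒴} P(Y = y ∣ X_1, …, X_D, Y⁻) ) be the irreducible Bayes error. Let A ⊆ {1,…,D} be a subset of selected features satisfying I(Y; X_A ∣ Y⁻) ≥ Δ² / 2. Then inf over all measurable classifiers g with values in 𝒴 of P( Y ≠ g(X_A, Y⁻) ) ≤ ε + √( 2 · I(Y; X_{\{1,…,D\}} ∣ Y⁻) − Δ² ). -/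
/-!
Write `P`, `Q`, `R` for the conditional laws of `Y` given `W = (X, Y⁻)`, `V = (X_A, Y⁻)` and `Y⁻`.
Since `V` is a function of `W` and `Y⁻` one of `V`, the tower property
`E[P(y) G(V)] = E[Q(y) G(V)]` gives the chain rule
`I(Y; X ∣ Y⁻) = E[KL(P ‖ Q)] + I(Y; X_A ∣ Y⁻)`, hence `E[KL(P ‖ Q)] ≤ I(Y; X ∣ Y⁻) - Δ² / 2`.
If `ŷ` is the MAP label of `P`, the MAP label of `Q` is correct with `Q`-probability at least
`Q(ŷ) ≥ P(ŷ) - |P(ŷ) - Q(ŷ)|`, and `|P(ŷ) - Q(ŷ)|² ≤ KL(P ‖ Q)`: the total variation distance is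
bounded by the Hellinger distance (Le Cam), which is bounded by `KL` through `log x ≤ x - 1`.
Averaging, with Jensen's inequality for the square root, gives the bound.
-/

open MeasureTheory ProbabilityTheory
open scoped ENNReal

/-- Kullback–Leibler divergence between two measures (`∞` if `μ` is not absolutely
continuous w.r.t. `ν` or the log-likelihood ratio is not `μ`-integrable). -/
noncomputable def klDiv {α : Type*} [MeasurableSpace α] (μ ν : Measure α) : ℝ≥0∞ :=
  open scoped Classical in
  if μ ≪ ν ∧ Integrable (llr μ ν) μ then ENNReal.ofReal (∫ x, llr μ ν x ∂μ) else ∞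

/-- Conditional mutual information `I(U; V ∣ Z)`: the expectation, over `(V, Z)`, of the
KL divergence between the regular conditional law of `U` given `(V, Z)` and the regular
conditional law of `U` given `Z`. -/
noncomputable def cmi {Ω α β γ : Type*} [MeasurableSpace Ω]
    [MeasurableSpace α] [StandardBorelSpace α] [Nonempty α]
    [MeasurableSpace β] [MeasurableSpace γ]
    (μ : Measure Ω) [IsFiniteMeasure μ] (U : Ω → α) (V : Ω → β) (Z : Ω → γ) : ℝ≥0∞ :=
  ∫⁻ ω, klDiv (condDistrib U (fun ω' => (V ω', Z ω')) μ (V ω, Z ω)) (condDistrib U Z μ (Z ω)) ∂μ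

/-- The tuple of the features with indices in `S`. -/
noncomputable def featTuple {Ω : Type*} {D : ℕ} {d : Fin D → ℕ}
    (X : (i : Fin D) → Ω → (Fin (d i) → ℝ)) (S : Finset (Fin D)) (ω : Ω) :
    (i : S) → Fin (d i.1) → ℝ :=
  fun i => X i.1 ω

/-- The element of a finite nonempty type maximizing `f`. -/
noncomputable def argmaxFin {𝒴 : Type*} [Fintype 𝒴] [Nonempty 𝒴] (f : 𝒴 → ℝ) : 𝒴 :=
  (Finset.exists_max_image Finset.univ f Finset.univ_nonempty).choose


section ArgMax

variable {𝒴 : Type*} [Fintype 𝒴] [Nonempty 𝒴]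

lemma le_argmaxFin (f : 𝒴 → ℝ) (y : 𝒴) : f y ≤ f (argmaxFin f) :=
  (Finset.exists_max_image Finset.univ f Finset.univ_nonempty).choose_spec.2 y (Finset.mem_univ y)

lemma argmaxFin_congr {f g : 𝒴 → ℝ} (h : ∀ y, (∀ z, f z ≤ f y) ↔ ∀ z, g z ≤ g y) :
    argmaxFin f = argmaxFin g := by
  simp only [argmaxFin, Finset.mem_univ, true_and, forall_const, h]

lemma argmaxFin_eq_argmaxFin_indicator (f : 𝒴 → ℝ) :
    argmaxFin f = argmaxFin ({y | ∀ z, f z ≤ f y}.indicator 1) := by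
  set S := {y | ∀ z, f z ≤ f y}
  have hS : argmaxFin f ∈ S := le_argmaxFin f
  refine argmaxFin_congr fun y => ⟨fun hy z => ?_, fun hy => ?_⟩
  · rw [Set.indicator_of_mem (s := S) hy]
    exact Set.indicator_le_self' (fun _ _ => zero_le_one) z
  · by_contra hy'
    have := hy (argmaxFin f)
    rw [Set.indicator_of_mem hS, Set.indicator_of_notMem (s := S) hy'] at this
    norm_num at this

lemma measurable_argmaxFin [MeasurableSpace 𝒴] [MeasurableSingletonClass 𝒴] :
    Measurable (argmaxFin : (𝒴 → ℝ) → 𝒴) := by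
  refine measurable_to_countable' fun y => measurableSet_setOfPred.mpr ?_
  have hpre : (fun f : 𝒴 → ℝ => argmaxFin f ∈ ({y} : Set 𝒴)) = fun f => ∃ S : Set 𝒴,
      argmaxFin (S.indicator 1) = y ∧ ∀ x, x ∈ S ↔ ∀ z, f z ≤ f x := by
    ext f
    refine ⟨fun h => ⟨_, (argmaxFin_eq_argmaxFin_indicator f).symm.trans h, fun x => Iff.rfl⟩, ?_⟩
    rintro ⟨S, hS, hSf⟩
    rw [Set.mem_singleton_iff, argmaxFin_eq_argmaxFin_indicator, ← hS]
    congr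
    ext x
    exact (hSf x).symm
  rw [hpre]
  refine Measurable.exists fun S => measurable_const.and (Measurable.forall fun x =>
    measurable_const.iff (Measurable.forall fun z => measurableSet_setOfPred.mp ?_))
  exact measurableSet_le (measurable_pi_apply z) (measurable_pi_apply x)

end ArgMax

open Real

section KLInequalities

lemma sq_sqrt_sub_sqrt_le_mul_log_div_add_sub {a b : ℝ} (ha : 0 ≤ a) (hb : 0 ≤ b)
    (hab : b = 0 → a = 0) : (√a - √b) ^ 2 ≤ a * log (a / b) + (b - a) := by
  rcases ha.eq_or_lt with rfl | ha
  · simp [Real.sq_sqrt hb]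
  have hb : 0 < b := hb.lt_of_ne fun h => ha.ne' (hab h.symm)
  have hlog : 2 * (1 - √b / √a) ≤ log (a / b) := by
    have hsa := Real.sqrt_pos.2 ha
    have hsb := Real.sqrt_pos.2 hb
    have := Real.one_sub_inv_le_log_of_pos (div_pos hsa hsb)
    rw [inv_div, Real.log_div hsa.ne' hsb.ne', Real.log_sqrt ha.le, Real.log_sqrt hb.le] at this
    rw [Real.log_div ha.ne' hb.ne']
    linarith
  have hmul : a * (2 * (1 - √b / √a)) = 2 * a - 2 * √a * √b := by
    field_simp
    linear_combination √b * Real.mul_self_sqrt ha.le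
  nlinarith [mul_le_mul_of_nonneg_left hlog ha.le, Real.sq_sqrt ha.le, Real.sq_sqrt hb.le]

lemma mul_max_log_div_le {a b : ℝ} (ha : 0 ≤ a) (hb : 0 ≤ b) : a * max (log (b / a)) 0 ≤ b := by
  rw [mul_max_of_nonneg _ _ ha, mul_zero]
  refine max_le ?_ hb
  rcases ha.eq_or_lt with rfl | ha
  · simpa using hb
  rcases hb.eq_or_lt with rfl | hb
  · simp
  calc a * log (b / a) ≤ a * (b / a - 1) :=
        mul_le_mul_of_nonneg_left (Real.log_le_sub_one_of_pos (div_pos hb ha)) ha.le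
    _ = b - a := by field_simp
    _ ≤ b := by linarith

variable {ι : Type*} [Fintype ι] {p q : ι → ℝ}

lemma sum_sq_sqrt_sub_sqrt_le_sum_mul_log_div (hp : ∀ i, 0 ≤ p i) (hq : ∀ i, 0 ≤ q i)
    (hpq : ∀ i, q i = 0 → p i = 0) (hsum : ∑ i, p i = ∑ i, q i) :
    ∑ i, (√(p i) - √(q i)) ^ 2 ≤ ∑ i, p i * log (p i / q i) :=
  calc ∑ i, (√(p i) - √(q i)) ^ 2
      ≤ ∑ i, (p i * log (p i / q i) + (q i - p i)) := Finset.sum_le_sum fun i _ =>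
        sq_sqrt_sub_sqrt_le_mul_log_div_add_sub (hp i) (hq i) (hpq i)
    _ = ∑ i, p i * log (p i / q i) := by
        rw [Finset.sum_add_distrib, Finset.sum_sub_distrib, hsum, sub_self, add_zero]

lemma sum_mul_log_div_nonneg (hp : ∀ i, 0 ≤ p i) (hq : ∀ i, 0 ≤ q i)
    (hpq : ∀ i, q i = 0 → p i = 0) (hsum : ∑ i, p i = ∑ i, q i) :
    0 ≤ ∑ i, p i * log (p i / q i) :=
  (Finset.sum_nonneg fun _ _ => sq_nonneg _).trans
    (sum_sq_sqrt_sub_sqrt_le_sum_mul_log_div hp hq hpq hsum)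

lemma sq_sum_abs_sub_le (hp : ∀ i, 0 ≤ p i) (hq : ∀ i, 0 ≤ q i) :
    (∑ i, |p i - q i|) ^ 2 ≤ 2 * (∑ i, (p i + q i)) * ∑ i, (√(p i) - √(q i)) ^ 2 := by
  have hfactor : ∀ i, |p i - q i| = |√(p i) - √(q i)| * (√(p i) + √(q i)) := fun i => by
    rw [← abs_of_nonneg (add_nonneg (Real.sqrt_nonneg _) (Real.sqrt_nonneg _)), ← abs_mul]
    congr 1
    linear_combination (Real.sq_sqrt (hq i)) - Real.sq_sqrt (hp i)
  have hsq : ∀ i, (√(p i) + √(q i)) ^ 2 ≤ 2 * (p i + q i) := fun i => by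
    nlinarith [sq_nonneg (√(p i) - √(q i)), Real.sq_sqrt (hp i), Real.sq_sqrt (hq i)]
  calc (∑ i, |p i - q i|) ^ 2
      = (∑ i, |√(p i) - √(q i)| * (√(p i) + √(q i))) ^ 2 := by simp_rw [hfactor]
    _ ≤ (∑ i, |√(p i) - √(q i)| ^ 2) * ∑ i, (√(p i) + √(q i)) ^ 2 :=
        Finset.sum_mul_sq_le_sq_mul_sq _ _ _
    _ ≤ (∑ i, (√(p i) - √(q i)) ^ 2) * ∑ i, 2 * (p i + q i) := by
        simp_rw [sq_abs]
        exact mul_le_mul_of_nonneg_left (Finset.sum_le_sum fun i _ => hsq i)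
          (Finset.sum_nonneg fun _ _ => sq_nonneg _)
    _ = 2 * (∑ i, (p i + q i)) * ∑ i, (√(p i) - √(q i)) ^ 2 := by
        rw [← Finset.mul_sum]; ring

lemma two_mul_abs_sub_le_sum_abs_sub [DecidableEq ι] (hsum : ∑ i, p i = ∑ i, q i) (i : ι) :
    2 * |p i - q i| ≤ ∑ j, |p j - q j| := by
  have hzero : (p i - q i) + ∑ j ∈ Finset.univ.erase i, (p j - q j) = 0 := by
    rw [Finset.add_sum_erase _ (fun j => p j - q j) (Finset.mem_univ i), Finset.sum_sub_distrib,
      hsum, sub_self]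
  have hi : |p i - q i| ≤ ∑ j ∈ Finset.univ.erase i, |p j - q j| := by
    rw [eq_neg_of_add_eq_zero_left hzero, abs_neg]
    exact Finset.abs_sum_le_sum_abs _ _
  rw [← Finset.add_sum_erase _ (fun j => |p j - q j|) (Finset.mem_univ i)]
  linarith

lemma sq_sub_le_sum_mul_log_div (hp : ∀ i, 0 ≤ p i) (hq : ∀ i, 0 ≤ q i)
    (hpq : ∀ i, q i = 0 → p i = 0) (hp1 : ∑ i, p i = 1) (hq1 : ∑ i, q i = 1) (i : ι) :
    (p i - q i) ^ 2 ≤ ∑ j, p j * log (p j / q j) := by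
  classical
  have hsum : ∑ j, p j = ∑ j, q j := hp1.trans hq1.symm
  have htv := two_mul_abs_sub_le_sum_abs_sub hsum i
  have hcs := sq_sum_abs_sub_le hp hq
  have hkl := sum_sq_sqrt_sub_sqrt_le_sum_mul_log_div hp hq hpq hsum
  rw [Finset.sum_add_distrib, hp1, hq1] at hcs
  nlinarith [abs_nonneg (p i - q i), sq_abs (p i - q i)]

end KLInequalities

section MeasuresOnFiniteTypes

lemma absolutelyContinuous_of_forall_measure_singleton {α : Type*} [Countable α]
    [MeasurableSpace α] {ν ν' : Measure α} (h : ∀ y, ν' {y} = 0 → ν {y} = 0) :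
    ν ≪ ν' := fun s hs => by
  rw [← Set.biUnion_of_singleton s, measure_biUnion_null_iff s.to_countable] at hs ⊢
  exact fun y hy => h y (hs y hy)

variable {𝒴 : Type*} [MeasurableSpace 𝒴] {ν ν' : Measure 𝒴}

lemma measureReal_eq_zero_of_absolutelyContinuous [IsFiniteMeasure ν] [IsFiniteMeasure ν']
    (hac : ν ≪ ν') {s : Set 𝒴} (hs : ν'.real s = 0) : ν.real s = 0 := by
  rw [measureReal_eq_zero_iff] at hs ⊢
  exact hac hs

lemma measure_mul_ofReal [IsFiniteMeasure ν] (s : Set 𝒴) (l : ℝ) :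
    ν s * ENNReal.ofReal l = ENNReal.ofReal (ν.real s * max l 0) := by
  rw [ENNReal.ofReal_mul measureReal_nonneg, ofReal_measureReal, ENNReal.ofReal_max,
    ENNReal.ofReal_zero, max_eq_left zero_le]

lemma measure_mul_ofReal_log_div_le [IsFiniteMeasure ν] [IsFiniteMeasure ν'] (s : Set 𝒴) :
    ν s * ENNReal.ofReal (log (ν'.real s / ν.real s)) ≤ ν' s := by
  rw [measure_mul_ofReal, ← ofReal_measureReal (μ := ν')]
  exact ENNReal.ofReal_le_ofReal (mul_max_log_div_le measureReal_nonneg measureReal_nonneg)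

variable [MeasurableSingletonClass 𝒴]

lemma rnDeriv_eq_div_of_absolutelyContinuous [IsFiniteMeasure ν] [IsFiniteMeasure ν']
    (hac : ν ≪ ν') {y : 𝒴} (hy : ν' {y} ≠ 0) : ν.rnDeriv ν' y = ν {y} / ν' {y} := by
  rw [ENNReal.eq_div_iff hy (measure_ne_top _ _), mul_comm, ← lintegral_singleton,
    Measure.setLIntegral_rnDeriv hac]

variable [Fintype 𝒴]

lemma sum_measureReal_singleton_eq_one [IsProbabilityMeasure ν] : ∑ y, ν.real {y} = 1 := by
  rw [sum_measureReal_singleton, Finset.coe_univ, probReal_univ]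

lemma klDiv_eq_ofReal_sum [IsFiniteMeasure ν] [IsFiniteMeasure ν'] (hac : ν ≪ ν') :
    klDiv ν ν' = ENNReal.ofReal (∑ y, ν.real {y} * log (ν.real {y} / ν'.real {y})) := by
  rw [klDiv, if_pos ⟨hac, .of_finite⟩, integral_fintype .of_finite]
  congr 1
  refine Finset.sum_congr rfl fun y _ => ?_
  by_cases hy : ν {y} = 0
  · simp [measureReal_def, hy]
  rw [smul_eq_mul, llr, rnDeriv_eq_div_of_absolutelyContinuous hac (fun h => hy (hac h)),
    ENNReal.toReal_div, measureReal_def, measureReal_def]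

lemma klDiv_self_of_isFiniteMeasure [IsFiniteMeasure ν] : klDiv ν ν = 0 := by
  rw [klDiv_eq_ofReal_sum Measure.AbsolutelyContinuous.rfl, ENNReal.ofReal_eq_zero]
  refine (Finset.sum_eq_zero fun y _ => ?_).le
  rcases eq_or_ne (ν.real {y}) 0 with hy | hy <;> simp [hy]

/-- The two sums are the `ν₁`-averages of the negative and the positive part of `log (ν₂ / ν₃)`;
keeping them apart states the chain rule in `ℝ≥0∞`, where that log-ratio need not be integrable. -/
lemma klDiv_add_sum_eq_klDiv_add_sum {ν₁ ν₂ ν₃ : Measure 𝒴} [IsProbabilityMeasure ν₁]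
    [IsProbabilityMeasure ν₂] [IsProbabilityMeasure ν₃] (h₁₂ : ν₁ ≪ ν₂) (h₂₃ : ν₂ ≪ ν₃) :
    klDiv ν₁ ν₃ + ∑ y, ν₁ {y} * ENNReal.ofReal (log (ν₃.real {y} / ν₂.real {y}))
      = klDiv ν₁ ν₂ + ∑ y, ν₁ {y} * ENNReal.ofReal (log (ν₂.real {y} / ν₃.real {y})) := by
  have hkl_nonneg : ∀ (ν ν' : Measure 𝒴) [IsProbabilityMeasure ν] [IsProbabilityMeasure ν'],
      ν ≪ ν' → 0 ≤ ∑ y, ν.real {y} * log (ν.real {y} / ν'.real {y}) := fun ν ν' _ _ hac =>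
    sum_mul_log_div_nonneg (fun _ => measureReal_nonneg) (fun _ => measureReal_nonneg)
      (fun _ => measureReal_eq_zero_of_absolutelyContinuous hac)
      (sum_measureReal_singleton_eq_one.trans sum_measureReal_singleton_eq_one.symm)
  have hpos : ∀ l : ℝ, ∀ y, 0 ≤ ν₁.real {y} * max l 0 := fun l y =>
    mul_nonneg measureReal_nonneg (le_max_right _ _)
  simp_rw [measure_mul_ofReal]
  rw [klDiv_eq_ofReal_sum (h₁₂.trans h₂₃), klDiv_eq_ofReal_sum h₁₂,
    ← ENNReal.ofReal_sum_of_nonneg fun y _ => hpos _ y,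
    ← ENNReal.ofReal_sum_of_nonneg fun y _ => hpos _ y,
    ← ENNReal.ofReal_add (hkl_nonneg _ _ (h₁₂.trans h₂₃)) (Finset.sum_nonneg fun y _ => hpos _ y),
    ← ENNReal.ofReal_add (hkl_nonneg _ _ h₁₂) (Finset.sum_nonneg fun y _ => hpos _ y),
    ← Finset.sum_add_distrib, ← Finset.sum_add_distrib]
  congr 1
  refine Finset.sum_congr rfl fun y _ => ?_
  by_cases h₁ : ν₁.real {y} = 0
  · simp [h₁]
  have h₂ : ν₂.real {y} ≠ 0 := fun h => h₁ (measureReal_eq_zero_of_absolutelyContinuous h₁₂ h)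
  have h₃ : ν₃.real {y} ≠ 0 := fun h => h₂ (measureReal_eq_zero_of_absolutelyContinuous h₂₃ h)
  simp_rw [← mul_add, Real.log_div h₁ h₂, Real.log_div h₁ h₃, Real.log_div h₂ h₃,
    Real.log_div h₃ h₂]
  congr 1
  have := max_zero_sub_max_neg_zero_eq_self (log (ν₂.real {y}) - log (ν₃.real {y}))
  rw [neg_sub] at this
  linarith

lemma measure_compl_argmaxFin_le_add_klDiv_rpow [Nonempty 𝒴] [IsProbabilityMeasure ν]
    [IsProbabilityMeasure ν'] (y : 𝒴) :
    ν' {argmaxFin fun z => ν'.real {z}}ᶜ ≤ ν {y}ᶜ + klDiv ν ν' ^ (2⁻¹ : ℝ) := by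
  by_cases hac : ν ≪ ν'
  swap
  · rw [klDiv, if_neg fun h => hac h.1, ENNReal.top_rpow_of_pos (by norm_num), add_top]
    exact le_top
  have hsq : (ν.real {y} - ν'.real {y}) ^ 2 ≤ ∑ z, ν.real {z} * log (ν.real {z} / ν'.real {z}) :=
    sq_sub_le_sum_mul_log_div (fun _ => measureReal_nonneg) (fun _ => measureReal_nonneg)
      (fun _ => measureReal_eq_zero_of_absolutelyContinuous hac) sum_measureReal_singleton_eq_one
      sum_measureReal_singleton_eq_one y
  have hmax := le_argmaxFin (fun z => ν'.real {z}) y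
  rw [klDiv_eq_ofReal_sum hac, ENNReal.ofReal_rpow_of_nonneg ((sq_nonneg _).trans hsq)
    (by norm_num), ← one_div, ← Real.sqrt_eq_rpow, ← ofReal_measureReal (μ := ν'),
    ← ofReal_measureReal (μ := ν), ← ENNReal.ofReal_add measureReal_nonneg (Real.sqrt_nonneg _)]
  refine ENNReal.ofReal_le_ofReal ?_
  rw [measureReal_compl (measurableSet_singleton _), measureReal_compl (measurableSet_singleton _),
    probReal_univ, probReal_univ]
  linarith [Real.abs_le_sqrt hsq, le_abs_self (ν.real {y} - ν'.real {y})]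

end MeasuresOnFiniteTypes

section FamiliesOfMeasures

variable {Ω 𝒴 : Type*} [MeasurableSpace Ω] {μ : Measure Ω} [Fintype 𝒴] [MeasurableSpace 𝒴]
  [MeasurableSingletonClass 𝒴]

lemma aemeasurable_klDiv {ν ν' : Ω → Measure 𝒴} [∀ ω, IsFiniteMeasure (ν ω)]
    [∀ ω, IsFiniteMeasure (ν' ω)] (hν : Measurable ν) (hν' : Measurable ν')
    (hac : ∀ᵐ ω ∂μ, ν ω ≪ ν' ω) : AEMeasurable (fun ω => klDiv (ν ω) (ν' ω)) μ := by
  have hreal : ∀ {ρ : Ω → Measure 𝒴}, Measurable ρ → ∀ y, Measurable fun ω => (ρ ω).real {y} :=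
    fun hρ y => ((Measure.measurable_coe (measurableSet_singleton y)).comp hρ).ennreal_toReal
  refine (Measurable.aemeasurable (f := fun ω => ENNReal.ofReal
    (∑ y, (ν ω).real {y} * log ((ν ω).real {y} / (ν' ω).real {y})))
    (Finset.measurable_sum _ fun y _ => (hreal hν y).mul
      ((hreal hν y).div (hreal hν' y)).log).ennreal_ofReal).congr ?_
  filter_upwards [hac] with ω hω
  exact (klDiv_eq_ofReal_sum hω).symm

variable {ν₁ ν₂ ν₃ : Ω → Measure 𝒴}

lemma measurable_sum_mul_ofReal_log_div (h₁ : Measurable ν₁) (h₂ : Measurable ν₂)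
    (h₃ : Measurable ν₃) :
    Measurable fun ω => ∑ y, ν₁ ω {y} * ENNReal.ofReal (log ((ν₂ ω).real {y} / (ν₃ ω).real {y})) :=
  Finset.measurable_sum _ fun y _ =>
    ((Measure.measurable_coe (measurableSet_singleton y)).comp h₁).mul
      ((((Measure.measurable_coe (measurableSet_singleton y)).comp h₂).ennreal_toReal.div
        ((Measure.measurable_coe (measurableSet_singleton y)).comp h₃).ennreal_toReal).log
        ).ennreal_ofReal

lemma lintegral_klDiv_add_lintegral_sum_eq [∀ ω, IsProbabilityMeasure (ν₁ ω)]
    [∀ ω, IsProbabilityMeasure (ν₂ ω)] [∀ ω, IsProbabilityMeasure (ν₃ ω)]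
    (h₁ : Measurable ν₁) (h₂ : Measurable ν₂) (h₃ : Measurable ν₃)
    (h₁₂ : ∀ᵐ ω ∂μ, ν₁ ω ≪ ν₂ ω) (h₂₃ : ∀ᵐ ω ∂μ, ν₂ ω ≪ ν₃ ω) :
    ∫⁻ ω, klDiv (ν₁ ω) (ν₃ ω) ∂μ
        + ∫⁻ ω, ∑ y, ν₁ ω {y} * ENNReal.ofReal (log ((ν₃ ω).real {y} / (ν₂ ω).real {y})) ∂μ
      = ∫⁻ ω, klDiv (ν₁ ω) (ν₂ ω) ∂μ
        + ∫⁻ ω, ∑ y, ν₁ ω {y} * ENNReal.ofReal (log ((ν₂ ω).real {y} / (ν₃ ω).real {y})) ∂μ := by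
  rw [← lintegral_add_right _ (measurable_sum_mul_ofReal_log_div h₁ h₃ h₂),
    ← lintegral_add_right _ (measurable_sum_mul_ofReal_log_div h₁ h₂ h₃)]
  refine lintegral_congr_ae ?_
  filter_upwards [h₁₂, h₂₃] with ω hω₁₂ hω₂₃
  exact klDiv_add_sum_eq_klDiv_add_sum hω₁₂ hω₂₃

lemma lintegral_sum_mul_ofReal_log_div_le [∀ ω, IsFiniteMeasure (ν₁ ω)]
    [∀ ω, IsProbabilityMeasure (ν₂ ω)] :
    ∫⁻ ω, ∑ y, ν₁ ω {y} * ENNReal.ofReal (log ((ν₂ ω).real {y} / (ν₁ ω).real {y})) ∂μ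
      ≤ μ Set.univ :=
  calc _ ≤ ∫⁻ ω, ∑ y, ν₂ ω {y} ∂μ :=
        lintegral_mono fun ω => Finset.sum_le_sum fun y _ => measure_mul_ofReal_log_div_le _
    _ = μ Set.univ := by
        simp_rw [sum_measure_singleton, Finset.coe_univ, measure_univ, lintegral_one]

end FamiliesOfMeasures

lemma lintegral_rpow_inv_two_le {Ω : Type*} [MeasurableSpace Ω] {μ : Measure Ω}
    [IsProbabilityMeasure μ] {F : Ω → ℝ≥0∞} (hF : AEMeasurable F μ) :
    ∫⁻ ω, F ω ^ (2⁻¹ : ℝ) ∂μ ≤ (∫⁻ ω, F ω ∂μ) ^ (2⁻¹ : ℝ) := by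
  have := ENNReal.lintegral_mul_le_Lp_mul_Lq μ Real.HolderConjugate.two_two
    (hF.pow_const (2⁻¹ : ℝ)) (aemeasurable_const (b := (1 : ℝ≥0∞)))
  simp_rw [Pi.mul_apply, mul_one, ← ENNReal.rpow_mul] at this
  norm_num at this
  rwa [one_div] at this

section BayesClassifier

variable {β 𝒴 : Type*} [MeasurableSpace β] [Fintype 𝒴] [Nonempty 𝒴] [MeasurableSpace 𝒴]

noncomputable def bayesClassifier (κ : Kernel β 𝒴) (b : β) : 𝒴 :=
  argmaxFin fun y => (κ b).real {y}

lemma measurable_bayesClassifier [MeasurableSingletonClass 𝒴] (κ : Kernel β 𝒴) :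
    Measurable (bayesClassifier κ) :=
  measurable_argmaxFin.comp (measurable_pi_lambda _ fun y =>
    (κ.measurable_coe (measurableSet_singleton y)).ennreal_toReal)

end BayesClassifier

section CondDistrib

variable {Ω β γ 𝒴 : Type*} [MeasurableSpace Ω] [MeasurableSpace β] [MeasurableSpace γ]
  [MeasurableSpace 𝒴] [StandardBorelSpace 𝒴] [Nonempty 𝒴]
  {μ : Measure Ω} [IsFiniteMeasure μ] {Y : Ω → 𝒴} {X : Ω → β}

lemma lintegral_condDistrib_mul (hX : Measurable X) (hY : Measurable Y) {s : Set 𝒴}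
    (hs : MeasurableSet s) {G : β → ℝ≥0∞} (hG : Measurable G) :
    ∫⁻ ω, condDistrib Y X μ (X ω) s * G (X ω) ∂μ = ∫⁻ ω in Y ⁻¹' s, G (X ω) ∂μ := by
  set F : β × 𝒴 → ℝ≥0∞ := (Prod.snd ⁻¹' s).indicator fun p => G p.1
  have hF : Measurable F := (hG.comp measurable_fst).indicator (measurable_snd hs)
  calc ∫⁻ ω, condDistrib Y X μ (X ω) s * G (X ω) ∂μ
      = ∫⁻ x, ∫⁻ y, F (x, y) ∂condDistrib Y X μ x ∂μ.map X := by
        rw [lintegral_map (hF.lintegral_kernel_prod_right') hX]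
        refine lintegral_congr fun ω => ?_
        rw [mul_comm, ← lintegral_indicator_const hs]
        rfl
    _ = ∫⁻ p, F p ∂μ.map fun ω => (X ω, Y ω) := by
        rw [← compProd_map_condDistrib hY.aemeasurable, Measure.lintegral_compProd hF]
    _ = ∫⁻ ω in Y ⁻¹' s, G (X ω) ∂μ := by
        rw [lintegral_map hF (hX.prodMk hY), ← lintegral_indicator (hY hs)]
        rfl

lemma lintegral_condDistrib_mul_comp (hX : Measurable X) (hY : Measurable Y) {s : Set 𝒴}
    (hs : MeasurableSet s) {f : β → γ} (hf : Measurable f) {G : γ → ℝ≥0∞} (hG : Measurable G) :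
    ∫⁻ ω, condDistrib Y X μ (X ω) s * G (f (X ω)) ∂μ
      = ∫⁻ ω, condDistrib Y (f ∘ X) μ (f (X ω)) s * G (f (X ω)) ∂μ :=
  (lintegral_condDistrib_mul hX hY hs (hG.comp hf)).trans
    (lintegral_condDistrib_mul (hf.comp hX) hY hs hG).symm

lemma measure_ne_comp_eq_lintegral_condDistrib [Countable 𝒴] [MeasurableSingletonClass 𝒴]
    (hX : Measurable X) (hY : Measurable Y) {h : β → 𝒴} (hh : Measurable h) :
    μ {ω | Y ω ≠ h (X ω)} = ∫⁻ ω, condDistrib Y X μ (X ω) {h (X ω)}ᶜ ∂μ := by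
  have hS : MeasurableSet {p : β × 𝒴 | p.2 ≠ h p.1} :=
    (measurableSet_eq_fun measurable_snd (hh.comp measurable_fst)).compl
  rw [show {ω | Y ω ≠ h (X ω)} = (fun ω => (X ω, Y ω)) ⁻¹' {p | p.2 ≠ h p.1} from rfl,
    ← Measure.map_apply (hX.prodMk hY) hS, ← compProd_map_condDistrib hY.aemeasurable,
    Measure.compProd_apply hS, lintegral_map (Kernel.measurable_kernel_prodMk_left hS) hX]
  rfl

end CondDistrib

section ConditionalKL

variable {Ω β γ δ 𝒴 : Type*} [MeasurableSpace Ω] [MeasurableSpace β] [MeasurableSpace γ]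
  [MeasurableSpace δ] [Fintype 𝒴] [Nonempty 𝒴] [MeasurableSpace 𝒴] [DiscreteMeasurableSpace 𝒴]
  {μ : Measure Ω} {Y : Ω → 𝒴} {X : Ω → β} {f : β → γ}

lemma lintegral_sum_condDistrib_mul_comp [IsFiniteMeasure μ] (hX : Measurable X) (hY : Measurable Y)
    (hf : Measurable f) (G : 𝒴 → γ → ℝ≥0∞) (hG : ∀ y, Measurable (G y)) :
    ∫⁻ ω, ∑ y, condDistrib Y X μ (X ω) {y} * G y (f (X ω)) ∂μ
      = ∫⁻ ω, ∑ y, condDistrib Y (f ∘ X) μ (f (X ω)) {y} * G y (f (X ω)) ∂μ := by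
  have hP : ∀ y, Measurable fun b => condDistrib Y X μ b {y} := fun y =>
    Kernel.measurable_coe _ (measurableSet_singleton y)
  have hQ : ∀ y, Measurable fun c => condDistrib Y (f ∘ X) μ c {y} := fun y =>
    Kernel.measurable_coe _ (measurableSet_singleton y)
  rw [lintegral_finsetSum, lintegral_finsetSum]
  · exact Finset.sum_congr rfl fun y _ =>
      lintegral_condDistrib_mul_comp hX hY (measurableSet_singleton y) hf (hG y)
  all_goals exact fun y _ => by fun_prop

lemma ae_absolutelyContinuous_condDistrib_comp [IsFiniteMeasure μ] (hX : Measurable X)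
    (hY : Measurable Y) (hf : Measurable f) :
    ∀ᵐ ω ∂μ, condDistrib Y X μ (X ω) ≪ condDistrib Y (f ∘ X) μ (f (X ω)) := by
  have h : ∀ y, ∀ᵐ ω ∂μ,
      condDistrib Y (f ∘ X) μ (f (X ω)) {y} = 0 → condDistrib Y X μ (X ω) {y} = 0 := by
    intro y
    set N := {v | condDistrib Y (f ∘ X) μ v {y} = 0}
    have hN : MeasurableSet N :=
      Kernel.measurable_coe _ (measurableSet_singleton y) (measurableSet_singleton 0)
    have hG : Measurable (N.indicator (1 : γ → ℝ≥0∞)) := measurable_one.indicator hN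
    have hzero : ∫⁻ ω, condDistrib Y X μ (X ω) {y} * N.indicator 1 (f (X ω)) ∂μ = 0 := by
      rw [lintegral_condDistrib_mul_comp hX hY (measurableSet_singleton y) hf hG]
      refine (lintegral_congr fun ω => ?_).trans lintegral_zero
      by_cases hω : f (X ω) ∈ N
      · rw [show condDistrib Y (f ∘ X) μ (f (X ω)) {y} = 0 from hω, zero_mul]
      · rw [Set.indicator_of_notMem hω, mul_zero]
    have hmeas : Measurable fun ω => condDistrib Y X μ (X ω) {y} * N.indicator 1 (f (X ω)) :=
      ((Kernel.measurable_coe _ (measurableSet_singleton y)).comp hX).mul (hG.comp (hf.comp hX))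
    filter_upwards [(lintegral_eq_zero_iff hmeas).1 hzero] with ω hω hfX
    simpa [Set.indicator_of_mem (s := N) hfX] using hω
  filter_upwards [ae_all_iff.2 h] with ω hω
  exact absolutelyContinuous_of_forall_measure_singleton hω

theorem lintegral_klDiv_condDistrib_eq_add [IsFiniteMeasure μ] {W : Ω → β} {V : Ω → γ}
    {Z : Ω → δ} {g : γ → δ} (hY : Measurable Y) (hW : Measurable W) (hf : Measurable f)
    (hg : Measurable g) (hV : V = f ∘ W) (hZ : Z = g ∘ V) :
    ∫⁻ ω, klDiv (condDistrib Y W μ (W ω)) (condDistrib Y Z μ (Z ω)) ∂μ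
      = ∫⁻ ω, klDiv (condDistrib Y W μ (W ω)) (condDistrib Y V μ (V ω)) ∂μ
        + ∫⁻ ω, klDiv (condDistrib Y V μ (V ω)) (condDistrib Y Z μ (Z ω)) ∂μ := by
  subst hV hZ
  have hQreal : ∀ y, Measurable fun v => (condDistrib Y (f ∘ W) μ v).real {y} := fun y =>
    (Kernel.measurable_coe _ (measurableSet_singleton y)).ennreal_toReal
  have hRreal : ∀ y, Measurable fun v => (condDistrib Y (g ∘ f ∘ W) μ (g v)).real {y} := fun y =>
    ((Kernel.measurable_coe _ (measurableSet_singleton y)).comp hg).ennreal_toReal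
  have hPQ := ae_absolutelyContinuous_condDistrib_comp hW hY hf (μ := μ)
  have hQR : ∀ᵐ ω ∂μ,
      condDistrib Y (f ∘ W) μ (f (W ω)) ≪ condDistrib Y (g ∘ f ∘ W) μ (g (f (W ω))) :=
    ae_absolutelyContinuous_condDistrib_comp (hf.comp hW) hY hg
  have hP : Measurable fun ω => condDistrib Y W μ (W ω) := (condDistrib Y W μ).measurable.comp hW
  have hQ : Measurable fun ω => condDistrib Y (f ∘ W) μ (f (W ω)) :=
    (condDistrib Y (f ∘ W) μ).measurable.comp (hf.comp hW)
  have hR : Measurable fun ω => condDistrib Y (g ∘ f ∘ W) μ (g (f (W ω))) :=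
    (condDistrib Y (g ∘ f ∘ W) μ).measurable.comp (hg.comp (hf.comp hW))
  have hPR := lintegral_klDiv_add_lintegral_sum_eq hP hQ hR hPQ hQR
  have hQQR := lintegral_klDiv_add_lintegral_sum_eq hQ hQ hR (ae_of_all _ fun _ => .rfl) hQR
  simp only [klDiv_self_of_isFiniteMeasure, lintegral_zero, zero_add] at hQQR
  have hneg := lintegral_sum_condDistrib_mul_comp (μ := μ) hW hY hf
    (fun y v => ENNReal.ofReal (log ((condDistrib Y (g ∘ f ∘ W) μ (g v)).real {y} /
      (condDistrib Y (f ∘ W) μ v).real {y})))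
    fun y => ((hRreal y).div (hQreal y)).log.ennreal_ofReal
  have hpos := lintegral_sum_condDistrib_mul_comp (μ := μ) hW hY hf
    (fun y v => ENNReal.ofReal (log ((condDistrib Y (f ∘ W) μ v).real {y} /
      (condDistrib Y (g ∘ f ∘ W) μ (g v)).real {y})))
    fun y => ((hQreal y).div (hRreal y)).log.ennreal_ofReal
  beta_reduce at hneg hpos
  -- the negative part is integrable, being bounded by `R`, so it cancels
  rw [hneg, hpos, ← hQQR, ← add_assoc] at hPR
  exact (ENNReal.add_left_inj (ne_top_of_le_ne_top (measure_ne_top μ Set.univ)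
    lintegral_sum_mul_ofReal_log_div_le)).1 hPR

theorem measure_ne_bayesClassifier_comp_le [IsProbabilityMeasure μ] {V : Ω → γ}
    (hX : Measurable X) (hY : Measurable Y) (hf : Measurable f) (hV : V = f ∘ X) :
    μ {ω | Y ω ≠ bayesClassifier (condDistrib Y V μ) (V ω)}
      ≤ μ {ω | Y ω ≠ bayesClassifier (condDistrib Y X μ) (X ω)}
        + (∫⁻ ω, klDiv (condDistrib Y X μ (X ω)) (condDistrib Y V μ (V ω)) ∂μ) ^ (2⁻¹ : ℝ) := by
  subst hV
  have hKL : AEMeasurable (fun ω =>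
      klDiv (condDistrib Y X μ (X ω)) (condDistrib Y (f ∘ X) μ (f (X ω)))) μ :=
    aemeasurable_klDiv ((condDistrib Y X μ).measurable.comp hX)
      ((condDistrib Y (f ∘ X) μ).measurable.comp (hf.comp hX))
      (ae_absolutelyContinuous_condDistrib_comp hX hY hf)
  rw [measure_ne_comp_eq_lintegral_condDistrib (hf.comp hX) hY (measurable_bayesClassifier _),
    measure_ne_comp_eq_lintegral_condDistrib hX hY (measurable_bayesClassifier _)]
  calc _ ≤ ∫⁻ ω, (condDistrib Y X μ (X ω) {bayesClassifier (condDistrib Y X μ) (X ω)}ᶜ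
          + klDiv (condDistrib Y X μ (X ω)) (condDistrib Y (f ∘ X) μ (f (X ω))) ^ (2⁻¹ : ℝ)) ∂μ :=
        lintegral_mono fun ω => measure_compl_argmaxFin_le_add_klDiv_rpow _
    _ ≤ _ := by
        rw [lintegral_add_right' _ (hKL.pow_const _)]
        gcongr
        exact lintegral_rpow_inv_two_le hKL

end ConditionalKL

lemma measure_ne_argmaxFin_condExp_eq {Ω β 𝒴 : Type*} [MeasurableSpace Ω] [MeasurableSpace β]
    [Fintype 𝒴] [Nonempty 𝒴] [MeasurableSpace 𝒴] [DiscreteMeasurableSpace 𝒴] {μ : Measure Ω}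
    [IsFiniteMeasure μ] {X : Ω → β} {Y : Ω → 𝒴} (hX : Measurable X) (hY : Measurable Y) :
    μ {ω | Y ω ≠ argmaxFin fun y => (μ[{ω' | Y ω' = y}.indicator (fun _ => (1 : ℝ)) |
        MeasurableSpace.comap X inferInstance]) ω}
      = μ {ω | Y ω ≠ bayesClassifier (condDistrib Y X μ) (X ω)} := by
  refine measure_congr ?_
  filter_upwards [ae_all_iff.2 fun y => condDistrib_ae_eq_condExp (μ := μ) hX hY
    (measurableSet_singleton y)] with ω hω
  change (Y ω ≠ _) = (Y ω ≠ _)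
  rw [bayesClassifier, funext hω]
  rfl

section Features

variable {Ω : Type*} [MeasurableSpace Ω] {D : ℕ} {d : Fin D → ℕ}

def featRestrict (A : Finset (Fin D))
    (x : (i : (Finset.univ : Finset (Fin D))) → Fin (d i.1) → ℝ) : (i : A) → Fin (d i.1) → ℝ :=
  fun i => x ⟨i.1, Finset.mem_univ _⟩

lemma measurable_featRestrict (A : Finset (Fin D)) : Measurable (featRestrict (d := d) A) :=
  measurable_pi_lambda _ fun _ => measurable_pi_apply _

lemma measurable_featTuple {X : (i : Fin D) → Ω → (Fin (d i) → ℝ)} (hX : ∀ i, Measurable (X i))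
    (S : Finset (Fin D)) : Measurable (featTuple X S) :=
  measurable_pi_lambda _ fun i => hX i.1

end Features

lemma le_two_mul_sub_ofReal_sq {a b c : ℝ≥0∞} {Δ : ℝ} (hc : c = a + b)
    (hb : ENNReal.ofReal (Δ ^ 2 / 2) ≤ b) : a ≤ 2 * c - ENNReal.ofReal (Δ ^ 2) := by
  refine ENNReal.le_sub_of_add_le_right ENNReal.ofReal_ne_top ?_
  have hΔ : ENNReal.ofReal (Δ ^ 2) = 2 * ENNReal.ofReal (Δ ^ 2 / 2) := by
    rw [← ENNReal.ofReal_ofNat 2, ← ENNReal.ofReal_mul zero_le_two]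
    ring_nf
  rw [hc, hΔ, mul_add]
  gcongr
  exact le_mul_of_one_le_left' one_le_two

/-- **Forward TEFS classification guarantee (Theorem 4, classification).** If the selected
subset `A` satisfies `I(Y; X_A ∣ Y⁻) ≥ Δ² / 2`, then the best classification error using
only `(X_A, Y⁻)` is at most `ε + √(2 · TE_{X → Y} − Δ²)`. -/
theorem forward_TEFS_classification_error_bound
    {Ω 𝒴 : Type*} [MeasurableSpace Ω]
    [Fintype 𝒴] [Nonempty 𝒴] [MeasurableSpace 𝒴] [DiscreteMeasurableSpace 𝒴]
    (μ : Measure Ω) [IsProbabilityMeasure μ]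
    {D dY : ℕ} {d : Fin D → ℕ}
    (Y : Ω → 𝒴) (X : (i : Fin D) → Ω → (Fin (d i) → ℝ)) (Ym : Ω → (Fin dY → ℝ))
    (hY : Measurable Y) (hX : ∀ i, Measurable (X i)) (hYm : Measurable Ym)
    (ε : ℝ≥0∞)
    (hε : ε = μ {ω | Y ω ≠ argmaxFin (fun y =>
      (μ[Set.indicator {ω' | Y ω' = y} (fun _ => (1 : ℝ)) | MeasurableSpace.comap
        (fun ω' => (featTuple X Finset.univ ω', Ym ω')) inferInstance]) ω)})
    (Δ : ℝ) (A : Finset (Fin D))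
    (hA : ENNReal.ofReal (Δ ^ 2 / 2) ≤ cmi μ Y (featTuple X A) Ym) :
    (⨅ g : {g : ((i : A) → Fin (d i.1) → ℝ) × (Fin dY → ℝ) → 𝒴 // Measurable g},
        μ {ω | Y ω ≠ g.1 (featTuple X A ω, Ym ω)})
      ≤ ε + (2 * cmi μ Y (featTuple X Finset.univ) Ym - ENNReal.ofReal (Δ ^ 2))
              ^ (2⁻¹ : ℝ) := by
  subst hε
  set W := fun ω => (featTuple X Finset.univ ω, Ym ω)
  set V := fun ω => (featTuple X A ω, Ym ω)
  have hW : Measurable W := (measurable_featTuple hX _).prodMk hYm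
  have hrestrict : Measurable (Prod.map (featRestrict (d := d) A) (id : (Fin dY → ℝ) → _)) :=
    (measurable_featRestrict A).prodMap measurable_id
  have hchain : cmi μ Y (featTuple X Finset.univ) Ym
      = ∫⁻ ω, klDiv (condDistrib Y W μ (W ω)) (condDistrib Y V μ (V ω)) ∂μ
        + cmi μ Y (featTuple X A) Ym :=
    lintegral_klDiv_condDistrib_eq_add hY hW hrestrict measurable_snd rfl rfl
  calc _ ≤ μ {ω | Y ω ≠ bayesClassifier (condDistrib Y V μ) (V ω)} :=
        iInf_le_of_le ⟨_, measurable_bayesClassifier _⟩ le_rfl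
    _ ≤ μ {ω | Y ω ≠ bayesClassifier (condDistrib Y W μ) (W ω)}
          + (∫⁻ ω, klDiv (condDistrib Y W μ (W ω)) (condDistrib Y V μ (V ω)) ∂μ) ^ (2⁻¹ : ℝ) :=
        measure_ne_bayesClassifier_comp_le hW hY hrestrict rfl
    _ ≤ _ := by
        rw [measure_ne_argmaxFin_condExp_eq hW hY]
        gcongr
        exact le_two_mul_sub_ofReal_sq hchain hA
end

section
/- Let Y be a real-valued random variable with |Y| ≤ B almost surely and let W_A, W_Ā, Y⁻ be random vectors with values in finite-dimensional Euclidean spaces on a common probability space. Then the expected squared gap between the full and reduced regression functions is bounded by the conditional mutual information: E[ ( E[Y ∣ W_A, W_Ā, Y⁻] − E[Y ∣ W_Ā, Y⁻] )² ] ≤ 2B² · I(Y; W_A ∣ W_Ā, Y⁻). -/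
open MeasureTheory ProbabilityTheory
open scoped ENNReal

/-! For fixed values of the conditioning variables, the gap between the two regression functions
is the difference of the means of `Y` under `P = law(Y ∣ W_A, W_Ā, Y⁻)` and
`Q = law(Y ∣ W_Ā, Y⁻)`. As `|Y| ≤ B`, Hoeffding's lemma gives
`log E_Q e^{t (Y - E_Q Y)} ≤ B² t² / 2`,
and the Donsker–Varadhan inequality `E_P g - log E_Q e^g ≤ KL(P ‖ Q)` applied to
`g = t (Y - E_Q Y)` yields `t (E_P Y - E_Q Y) - B² t² / 2 ≤ KL(P ‖ Q)` for every `t`.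
Optimising over `t` gives the Pinsker-type bound `(E_P Y - E_Q Y)² ≤ 2 B² KL(P ‖ Q)`,
which is then integrated over the conditioning variables. -/

open Real

-- Gibbs' inequality for `P` against the tilted measure `Q.tilted g`.
lemma integral_sub_log_integral_exp_le_integral_llr {α : Type*} [MeasurableSpace α]
    {P Q : Measure α} [IsProbabilityMeasure P] [IsProbabilityMeasure Q]
    (hPQ : P ≪ Q) (h_int : Integrable (llr P Q) P) {g : α → ℝ}
    (hgP : Integrable g P) (hgQ : Integrable (fun x ↦ exp (g x)) Q) :
    ∫ x, g x ∂P - log (∫ x, exp (g x) ∂Q) ≤ ∫ x, llr P Q x ∂P := by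
  have := isProbabilityMeasure_tilted hgQ
  have hgibbs := InformationTheory.integral_llr_add_sub_measure_univ_nonneg
    (hPQ.trans (absolutelyContinuous_tilted hgQ)) (integrable_llr_tilted_right hPQ hgP h_int hgQ)
  rw [integral_llr_tilted_right hPQ hgP hgQ h_int] at hgibbs
  simp only [probReal_univ] at hgibbs
  linarith

lemma sq_le_of_forall_mul_sub_le {d c K : ℝ} (hc : 0 ≤ c)
    (h : ∀ t, t * d - c * t ^ 2 / 2 ≤ K) : d ^ 2 ≤ 2 * c * K := by
  rcases hc.eq_or_lt with rfl | hc
  · suffices d = 0 by simp [this]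
    by_contra hd
    have := h ((|K| + 1) / d)
    rw [div_mul_cancel₀ _ hd] at this
    linarith [le_abs_self K]
  · have := h (d / c)
    have hval : d / c * d - c * (d / c) ^ 2 / 2 = d ^ 2 / (2 * c) := by field_simp; ring
    rw [hval, div_le_iff₀ (by positivity)] at this
    linarith

lemma hasSubgaussianMGF_sub_integral_of_abs_le {α : Type*} [MeasurableSpace α]
    {Q : Measure α} [IsProbabilityMeasure Q] {X : α → ℝ} (hX : AEMeasurable X Q) {B : ℝ}
    (hXQ : ∀ᵐ x ∂Q, |X x| ≤ B) :
    HasSubgaussianMGF (fun x ↦ X x - ∫ y, X y ∂Q) (‖B‖₊ ^ 2) Q := by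
  convert hasSubgaussianMGF_of_mem_Icc hX (hXQ.mono fun x hx ↦ abs_le.mp hx) using 1
  ext
  push_cast
  rw [sub_neg_eq_add, ← two_mul, norm_mul, Real.norm_two]
  ring

lemma sq_sub_integral_le_klDiv {α : Type*} [MeasurableSpace α]
    (P Q : Measure α) [IsProbabilityMeasure P] [IsProbabilityMeasure Q]
    {X : α → ℝ} (hX : Measurable X) {B : ℝ} (hXP : ∀ᵐ x ∂P, |X x| ≤ B) (hXQ : ∀ᵐ x ∂Q, |X x| ≤ B) :
    ENNReal.ofReal ((∫ x, X x ∂P - ∫ x, X x ∂Q) ^ 2) ≤ ENNReal.ofReal (2 * B ^ 2) * klDiv P Q := by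
  have hXP_int : Integrable X P := .of_bound hX.aestronglyMeasurable B (by simpa using hXP)
  have hsubG := hasSubgaussianMGF_sub_integral_of_abs_le hX.aemeasurable hXQ
  by_cases hKL : P ≪ Q ∧ Integrable (llr P Q) P
  · rw [klDiv, if_pos hKL, ← ENNReal.ofReal_mul (by positivity)]
    refine ENNReal.ofReal_le_ofReal (sq_le_of_forall_mul_sub_le (sq_nonneg B) fun t ↦ ?_)
    have hgP : Integrable (fun x ↦ t * (X x - ∫ y, X y ∂Q)) P :=
      (hXP_int.sub (integrable_const _)).const_mul t
    have hDV := integral_sub_log_integral_exp_le_integral_llr hKL.1 hKL.2 hgP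
      (hsubG.integrable_exp_mul t)
    have hcgf := hsubG.cgf_le t
    rw [integral_const_mul, integral_sub hXP_int (integrable_const _), integral_const,
      probReal_univ, one_smul] at hDV
    simp only [NNReal.coe_pow, coe_nnnorm, Real.norm_eq_abs, sq_abs] at hcgf
    exact le_trans (by unfold cgf mgf at hcgf; linarith) hDV
  · rw [klDiv, if_neg hKL]
    rcases eq_or_ne B 0 with rfl | hB
    · have hP0 : ∫ x, X x ∂P = 0 :=
        integral_eq_zero_of_ae (hXP.mono fun x hx ↦ abs_nonpos_iff.mp hx)
      have hQ0 : ∫ x, X x ∂Q = 0 :=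
        integral_eq_zero_of_ae (hXQ.mono fun x hx ↦ abs_nonpos_iff.mp hx)
      simp [hP0, hQ0]
    · simp [ENNReal.mul_top, hB]

lemma ae_ae_condDistrib_mem {Ω α β : Type*} [MeasurableSpace Ω] [MeasurableSpace α]
    [MeasurableSpace β] [StandardBorelSpace β] [Nonempty β]
    (μ : Measure Ω) [IsFiniteMeasure μ] {X : Ω → α} {Y : Ω → β}
    (hX : Measurable X) (hY : Measurable Y) {s : Set β} (hs : MeasurableSet s)
    (h : ∀ᵐ ω ∂μ, Y ω ∈ s) :
    ∀ᵐ ω ∂μ, ∀ᵐ y ∂condDistrib Y X μ (X ω), y ∈ s := by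
  have hjoint : ∀ᵐ p ∂(μ.map X ⊗ₘ condDistrib Y X μ), p.2 ∈ s := by
    rwa [compProd_map_condDistrib hY.aemeasurable,
      ae_map_iff (hX.prodMk hY).aemeasurable (measurable_snd hs)]
  exact ae_of_ae_map hX.aemeasurable (Measure.ae_ae_of_ae_compProd hjoint)

lemma ofReal_integral_le_lintegral_ofReal {α : Type*} [MeasurableSpace α] {μ : Measure α}
    {f : α → ℝ} (hf : 0 ≤ᵐ[μ] f) :
    ENNReal.ofReal (∫ x, f x ∂μ) ≤ ∫⁻ x, ENNReal.ofReal (f x) ∂μ := by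
  by_cases hfi : Integrable f μ
  · exact (ofReal_integral_eq_lintegral_ofReal hfi hf).le
  · simp [integral_undef hfi]

/-- The expected squared gap between the full and the reduced regression functions is
bounded by `2B²` times the conditional mutual information `I(Y; W_A ∣ W_Ā, Y⁻)`. -/
theorem sq_gap_regression_functions_le
    {Ω : Type*} [MeasurableSpace Ω] (μ : Measure Ω) [IsProbabilityMeasure μ]
    {dA dAb dY : ℕ}
    (Y : Ω → ℝ) (WA : Ω → (Fin dA → ℝ)) (WAb : Ω → (Fin dAb → ℝ)) (Ym : Ω → (Fin dY → ℝ))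
    (hY : Measurable Y) (hWA : Measurable WA) (hWAb : Measurable WAb) (hYm : Measurable Ym)
    (B : ℝ) (hB : ∀ᵐ ω ∂μ, |Y ω| ≤ B) :
    ENNReal.ofReal (∫ ω,
        ((μ[Y | MeasurableSpace.comap (fun ω' => (WA ω', WAb ω', Ym ω')) inferInstance]) ω
          - (μ[Y | MeasurableSpace.comap (fun ω' => (WAb ω', Ym ω')) inferInstance]) ω) ^ 2 ∂μ)
      ≤ ENNReal.ofReal (2 * B ^ 2) * cmi μ Y WA (fun ω => (WAb ω, Ym ω)) := by
  set T := fun ω ↦ (WA ω, WAb ω, Ym ω)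
  set Z := fun ω ↦ (WAb ω, Ym ω)
  have hT : Measurable T := by fun_prop
  have hZ : Measurable Z := by fun_prop
  have hYint : Integrable Y μ := .of_bound hY.aestronglyMeasurable B (by simpa using hB)
  have hBset : MeasurableSet {y : ℝ | |y| ≤ B} := measurableSet_le measurable_abs measurable_const
  have hpointwise : ∀ᵐ ω ∂μ,
      ENNReal.ofReal ((μ[Y | MeasurableSpace.comap T inferInstance] ω
        - μ[Y | MeasurableSpace.comap Z inferInstance] ω) ^ 2)
      ≤ ENNReal.ofReal (2 * B ^ 2) * klDiv (condDistrib Y T μ (T ω)) (condDistrib Y Z μ (Z ω)) := by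
    filter_upwards [condExp_ae_eq_integral_condDistrib' hT hYint,
      condExp_ae_eq_integral_condDistrib' hZ hYint, ae_ae_condDistrib_mem μ hT hY hBset hB,
      ae_ae_condDistrib_mem μ hZ hY hBset hB] with ω hT_mean hZ_mean hT_bdd hZ_bdd
    rw [hT_mean, hZ_mean]
    exact sq_sub_integral_le_klDiv _ _ measurable_id hT_bdd hZ_bdd
  calc _ ≤ _ := ofReal_integral_le_lintegral_ofReal (ae_of_all _ fun _ ↦ sq_nonneg _)
    _ ≤ _ := lintegral_mono_ae hpointwise
    _ = _ := lintegral_const_mul' _ _ ENNReal.ofReal_ne_top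
end
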